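/- Let (X, μ, T) be a probability-preserving system with decay of correlations against Lipschitz observables: |∫ φψ∘T^n dμ − ∫φ dμ ∫ψ dμ| ≤ C θ^n ‖φ‖_Lip ‖ψ‖_Lip for some C > 0, 0 < θ < 1. Let U_n be measurable sets admitting Lipschitz functions Φ_n with 0 ≤ Φ_n ≤ 1, ‖Φ_n‖_Lip ≤ n^{2/ξ}, {Φ_n ≠ 1_{U_n}} ⊆ A_n with μ(A_n) ≤ C n^{−2}, and n μ(U_n) → 1. Then lim_{n→∞} n ∑_{j=⌈(log n)^5⌉}^{⌊√n⌋} μ(U_n ∩ T^{−j}U_n) = 0. -/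

import Mathlib

/-!
Off the exceptional set `A n` the observable `Φ n` is the indicator of `U n`, so
`μ (U ∩ T⁻ʲ U) ≤ ∫ Φ · Φ ∘ Tʲ + 2 μ A`, and decay of correlations bounds the covariance of `Φ`
and `Φ ∘ Tʲ` by `C θʲ n^{4/ξ}`. Each term is therefore at most `μ(U)² + 5 C n⁻² + C θʲ n^{4/ξ}`.
Summed over the at most `√n + 1` indices and multiplied by `n`, the first two parts are
`O(n^{-1/2})` because `n μ(U n) → 1`, while the geometric tail is `O(n^{1+4/ξ} θ^{(log n)⁵})`,
which tends to `0` because `(log n)⁵` outgrows every multiple of `log n`.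
-/

open MeasureTheory Filter Set Real

section Correlation

variable {X : Type*} {U A : Set X} {Φ : X → ℝ}

lemma indicator_one_mem_Icc (s : Set X) (x : X) : s.indicator (1 : X → ℝ) x ∈ Icc 0 1 := by
  by_cases hx : x ∈ s <;> simp [hx]

lemma indicator_mul_indicator_le (hΦ01 : ∀ x, Φ x ∈ Icc (0 : ℝ) 1)
    (hagree : {x | Φ x ≠ U.indicator 1 x} ⊆ A) (x y : X) :
    U.indicator 1 x * U.indicator 1 y ≤ Φ x * Φ y + A.indicator 1 x + A.indicator 1 y := by
  have hΦ : ∀ z ∉ A, Φ z = U.indicator 1 z := fun z hz => not_not.1 fun h => hz (hagree h)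
  obtain ⟨hx0, hx1⟩ := hΦ01 x
  obtain ⟨hy0, hy1⟩ := hΦ01 y
  obtain ⟨hUx0, hUx1⟩ := indicator_one_mem_Icc U x
  obtain ⟨hUy0, hUy1⟩ := indicator_one_mem_Icc U y
  by_cases hxA : x ∈ A <;> by_cases hyA : y ∈ A
  all_goals simp only [indicator_of_mem, indicator_of_notMem, hxA, hyA, not_false_eq_true, hΦ,
    Pi.one_apply]
  all_goals nlinarith [mul_nonneg hx0 hy0]

lemma le_indicator_add_indicator (hΦ01 : ∀ x, Φ x ∈ Icc (0 : ℝ) 1)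
    (hagree : {x | Φ x ≠ U.indicator 1 x} ⊆ A) (x : X) :
    Φ x ≤ U.indicator 1 x + A.indicator 1 x := by
  by_cases hxA : x ∈ A
  · simp only [indicator_of_mem hxA, Pi.one_apply]
    linarith [(hΦ01 x).2, (indicator_one_mem_Icc U x).1]
  · rw [not_not.1 fun h => hxA (hagree h), indicator_of_notMem hxA]
    simp

variable [MeasurableSpace X] {μ : Measure X} [IsProbabilityMeasure μ]

lemma integrable_of_mem_Icc {f : X → ℝ} (hf : Measurable f) (h01 : ∀ x, f x ∈ Icc (0 : ℝ) 1) :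
    Integrable f μ :=
  .of_bound hf.aestronglyMeasurable 1 <| .of_forall fun x => by
    rw [Real.norm_of_nonneg (h01 x).1]; exact (h01 x).2

lemma integrable_indicator_one {s : Set X} (hs : MeasurableSet s) :
    Integrable (s.indicator (1 : X → ℝ)) μ :=
  (integrable_const 1).indicator hs

lemma integral_le_measureReal_add (hU : MeasurableSet U) (hA : MeasurableSet A)
    (hΦm : Measurable Φ) (hΦ01 : ∀ x, Φ x ∈ Icc (0 : ℝ) 1)
    (hagree : {x | Φ x ≠ U.indicator 1 x} ⊆ A) :
    ∫ x, Φ x ∂μ ≤ μ.real U + μ.real A := by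
  rw [← integral_indicator_one hU, ← integral_indicator_one hA,
    ← integral_add (integrable_indicator_one hU) (integrable_indicator_one hA)]
  exact integral_mono (integrable_of_mem_Icc hΦm hΦ01)
    ((integrable_indicator_one hU).add (integrable_indicator_one hA))
    (le_indicator_add_indicator hΦ01 hagree)

lemma measureReal_inter_preimage_le_integral_mul_add {T : X → X} (hT : MeasurePreserving T μ μ)
    (hU : MeasurableSet U) (hA : MeasurableSet A) (hΦm : Measurable Φ)
    (hΦ01 : ∀ x, Φ x ∈ Icc (0 : ℝ) 1) (hagree : {x | Φ x ≠ U.indicator 1 x} ⊆ A) :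
    μ.real (U ∩ T ⁻¹' U) ≤ ∫ x, Φ x * Φ (T x) ∂μ + 2 * μ.real A := by
  have hTA := hT.measurable hA
  have hΦΦ : Integrable (fun x => Φ x * Φ (T x)) μ :=
    integrable_of_mem_Icc (hΦm.mul (hΦm.comp hT.measurable)) fun x =>
      ⟨mul_nonneg (hΦ01 x).1 (hΦ01 (T x)).1, mul_le_one₀ (hΦ01 x).2 (hΦ01 (T x)).1 (hΦ01 (T x)).2⟩
  have hΦΦA : Integrable (fun x => Φ x * Φ (T x) + A.indicator 1 x) μ :=
    hΦΦ.add (integrable_indicator_one hA)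
  have hUTU := hU.inter (hT.measurable hU)
  calc μ.real (U ∩ T ⁻¹' U) = ∫ x, (U ∩ T ⁻¹' U).indicator 1 x ∂μ :=
        (integral_indicator_one hUTU).symm
    _ ≤ ∫ x, (Φ x * Φ (T x) + A.indicator 1 x + (T ⁻¹' A).indicator 1 x) ∂μ := by
        refine integral_mono (integrable_indicator_one hUTU)
          (hΦΦA.add (integrable_indicator_one hTA)) fun x => ?_
        rw [inter_indicator_one]
        exact indicator_mul_indicator_le hΦ01 hagree x (T x)
    _ = ∫ x, Φ x * Φ (T x) ∂μ + 2 * μ.real A := by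
        rw [integral_add hΦΦA (integrable_indicator_one hTA),
          integral_add hΦΦ (integrable_indicator_one hA), integral_indicator_one hA,
          integral_indicator_one hTA, hT.measureReal_preimage hA.nullMeasurableSet]
        ring

lemma measureReal_inter_preimage_le_correlation_add {T : X → X} (hT : MeasurePreserving T μ μ)
    (hU : MeasurableSet U) (hA : MeasurableSet A) (hΦm : Measurable Φ)
    (hΦ01 : ∀ x, Φ x ∈ Icc (0 : ℝ) 1) (hagree : {x | Φ x ≠ U.indicator 1 x} ⊆ A) :
    μ.real (U ∩ T ⁻¹' U) ≤
      ((∫ x, Φ x * Φ (T x) ∂μ) - (∫ x, Φ x ∂μ) * ∫ x, Φ x ∂μ) + μ.real U ^ 2 + 5 * μ.real A := by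
  have hcover := measureReal_inter_preimage_le_integral_mul_add hT hU hA hΦm hΦ01 hagree
  have hmean := integral_le_measureReal_add (μ := μ) hU hA hΦm hΦ01 hagree
  have hmean0 : 0 ≤ ∫ x, Φ x ∂μ := integral_nonneg fun x => (hΦ01 x).1
  have hU1 : μ.real U ≤ 1 := measureReal_le_one
  have hA1 : μ.real A ≤ 1 := measureReal_le_one
  -- `(u + a)² ≤ u² + 3a` because `u, a ∈ [0, 1]`
  nlinarith [measureReal_nonneg (μ := μ) (s := U), measureReal_nonneg (μ := μ) (s := A)]

end Correlation

lemma sum_Icc_le_of_le_add_geom {f : ℕ → ℝ} {c D θ : ℝ} (hc : 0 ≤ c) (hD : 0 ≤ D) (hθ0 : 0 ≤ θ)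
    (hθ1 : θ < 1) (hf : ∀ j, f j ≤ c + D * θ ^ j) (m M : ℕ) :
    ∑ j ∈ Finset.Icc m M, f j ≤ (M + 1) * c + D * (θ ^ m / (1 - θ)) := by
  calc ∑ j ∈ Finset.Icc m M, f j ≤ ∑ j ∈ Finset.Icc m M, (c + D * θ ^ j) :=
        Finset.sum_le_sum fun j _ => hf j
    _ = (Finset.Icc m M).card * c + D * ∑ j ∈ Finset.Ico m (M + 1), θ ^ j := by
        rw [Finset.sum_add_distrib, Finset.sum_const, nsmul_eq_mul, ← Finset.mul_sum,
          Finset.Ico_add_one_right_eq_Icc]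
    _ ≤ (M + 1) * c + D * (θ ^ m / (1 - θ)) := by
        gcongr
        · rw [Nat.card_Icc]
          exact_mod_cast Nat.sub_le _ _
        · exact geom_sum_Ico_le_of_lt_one hθ0 hθ1

lemma tendsto_mul_add_mul_pow_atBot (p : ℝ) {c : ℝ} (hc : c < 0) {k : ℕ} (hk : 1 < k) :
    Tendsto (fun L : ℝ => p * L + c * L ^ k) atTop atBot := by
  have hpow : Tendsto (fun L : ℝ => p + c * L ^ (k - 1)) atTop atBot :=
    tendsto_atBot_add_const_left _ p ((tendsto_pow_atTop (by omega)).const_mul_atTop_of_neg hc)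
  refine (tendsto_id.atTop_mul_atBot₀ hpow).congr fun L => ?_
  rw [id, mul_add, ← mul_assoc, mul_comm L c, mul_assoc, ← pow_succ', Nat.sub_add_cancel hk.le]
  ring

lemma tendsto_rpow_mul_pow_ceil_log_pow (p : ℝ) {θ : ℝ} (hθ0 : 0 < θ) (hθ1 : θ < 1) {k : ℕ}
    (hk : 1 < k) :
    Tendsto (fun n : ℕ => (n : ℝ) ^ p * θ ^ ⌈log n ^ k⌉₊) atTop (nhds 0) := by
  have hexp : Tendsto (fun n : ℕ => exp (p * log n + log θ * log n ^ k)) atTop (nhds 0) :=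
    tendsto_exp_atBot.comp ((tendsto_mul_add_mul_pow_atBot p (log_neg hθ0 hθ1) hk).comp
      (tendsto_log_atTop.comp tendsto_natCast_atTop_atTop))
  refine squeeze_zero' (.of_forall fun n => by positivity) ?_ hexp
  filter_upwards [eventually_gt_atTop 0] with n hn
  have hn' : (0 : ℝ) < n := by exact_mod_cast hn
  rw [exp_add, rpow_def_of_pos hn', mul_comm (log n)]
  gcongr
  calc θ ^ ⌈log n ^ k⌉₊ = θ ^ (⌈log n ^ k⌉₊ : ℝ) := (rpow_natCast θ _).symm
    _ ≤ θ ^ (log n ^ k) := rpow_le_rpow_of_exponent_ge hθ0 hθ1.le (Nat.le_ceil _)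
    _ = exp (log θ * log n ^ k) := rpow_def_of_pos hθ0 _

lemma tendsto_sqrt_add_one_div_atTop :
    Tendsto (fun n : ℕ => (√n + 1) / n) atTop (nhds 0) := by
  have h := (tendsto_inv_atTop_zero.comp (tendsto_sqrt_atTop.comp tendsto_natCast_atTop_atTop)).add
    (tendsto_inv_atTop_nhds_zero_nat (𝕜 := ℝ))
  rw [add_zero] at h
  refine h.congr fun n => ?_
  simp only [Function.comp_apply, add_div, sqrt_div_self, one_div]

theorem stmt13 {X : Type*} [MetricSpace X] [MeasurableSpace X] [BorelSpace X]
    (μ : Measure X) [IsProbabilityMeasure μ] (T : X → X) (hT : MeasurePreserving T μ μ)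
    (C θ ξ : ℝ) (hC : 0 < C) (hθ0 : 0 < θ) (hθ1 : θ < 1) (hξ : 0 < ξ)
    -- decay of correlations against Lipschitz observables: for any observables
    -- `φ, ψ` whose Lipschitz norms (sup norm plus Lipschitz constant) are bounded
    -- by `Kφ` and `Kψ` respectively
    (hDC : ∀ (φ ψ : X → ℝ) (Kφ Kψ : ℝ), 0 ≤ Kφ → 0 ≤ Kψ →
      LipschitzWith (Real.toNNReal Kφ) φ → (∀ x, |φ x| ≤ Kφ) →
      LipschitzWith (Real.toNNReal Kψ) ψ → (∀ x, |ψ x| ≤ Kψ) →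
      ∀ n : ℕ, |(∫ x, φ x * ψ (T^[n] x) ∂μ) - (∫ x, φ x ∂μ) * ∫ x, ψ x ∂μ| ≤
        C * θ ^ n * Kφ * Kψ)
    (U A : ℕ → Set X) (hUm : ∀ n, MeasurableSet (U n)) (hAm : ∀ n, MeasurableSet (A n))
    (Φ : ℕ → X → ℝ)
    (hΦ01 : ∀ n x, 0 ≤ Φ n x ∧ Φ n x ≤ 1)
    (hΦLip : ∀ n : ℕ, LipschitzWith (Real.toNNReal ((n : ℝ) ^ (2 / ξ))) (Φ n))
    (hΦbd : ∀ n x, |Φ n x| ≤ (n : ℝ) ^ (2 / ξ))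
    (hagree : ∀ n, {x | Φ n x ≠ (U n).indicator (fun _ => (1 : ℝ)) x} ⊆ A n)
    (hA : ∀ n : ℕ, (μ (A n)).toReal ≤ C * (n : ℝ) ^ (-2 : ℝ))
    (hU1 : Tendsto (fun n : ℕ => (n : ℝ) * (μ (U n)).toReal) atTop (nhds 1)) :
    Tendsto (fun n : ℕ => (n : ℝ) *
        ∑ j ∈ Finset.Icc ⌈(Real.log n) ^ 5⌉₊ ⌊Real.sqrt n⌋₊,
          (μ (U n ∩ T^[j] ⁻¹' U n)).toReal) atTop (nhds 0) := by
  simp only [← measureReal_def] at hA hU1 ⊢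
  have hterm : ∀ n j : ℕ, μ.real (U n ∩ T^[j] ⁻¹' U n) ≤
      (μ.real (U n) ^ 2 + 5 * (C * (n : ℝ) ^ (-2 : ℝ))) + C * ((n : ℝ) ^ (2 / ξ)) ^ 2 * θ ^ j := by
    intro n j
    have hK : 0 ≤ (n : ℝ) ^ (2 / ξ) := by positivity
    have hcorr := (abs_le.1 (hDC _ _ _ _ hK hK (hΦLip n) (hΦbd n) (hΦLip n) (hΦbd n) j)).2
    have hcover := measureReal_inter_preimage_le_correlation_add (hT.iterate j) (hUm n) (hAm n)
      (hΦLip n).continuous.measurable (hΦ01 n) (hagree n)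
    linarith [hA n]
  have hbound : ∀ᶠ n : ℕ in atTop, (n : ℝ) *
      ∑ j ∈ Finset.Icc ⌈log n ^ 5⌉₊ ⌊√n⌋₊, μ.real (U n ∩ T^[j] ⁻¹' U n) ≤
        (√n + 1) / n * ((n * μ.real (U n)) ^ 2 + 5 * C) +
          C / (1 - θ) * ((n : ℝ) ^ (1 + 2 * (2 / ξ)) * θ ^ ⌈log n ^ 5⌉₊) := by
    filter_upwards [eventually_gt_atTop 0] with n hn
    have hn' : (0 : ℝ) < n := by exact_mod_cast hn
    have hsum := sum_Icc_le_of_le_add_geom (by positivity) (by positivity) hθ0.le hθ1 (hterm n)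
      ⌈log n ^ 5⌉₊ ⌊√n⌋₊
    have hM : (⌊√n⌋₊ : ℝ) ≤ √n := Nat.floor_le (sqrt_nonneg _)
    calc _ ≤ (n : ℝ) * ((√n + 1) * (μ.real (U n) ^ 2 + 5 * (C * (n : ℝ) ^ (-2 : ℝ))) +
          C * ((n : ℝ) ^ (2 / ξ)) ^ 2 * (θ ^ ⌈log n ^ 5⌉₊ / (1 - θ))) := by
          gcongr
          refine hsum.trans ?_
          gcongr
      _ = _ := by
          rw [rpow_neg hn'.le, rpow_one_add' hn'.le (by positivity), mul_comm 2 (2 / ξ),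
            rpow_mul hn'.le, rpow_two, rpow_two]
          field_simp
  have hlim := (tendsto_sqrt_add_one_div_atTop.mul ((hU1.pow 2).add_const (5 * C))).add
    ((tendsto_rpow_mul_pow_ceil_log_pow (1 + 2 * (2 / ξ)) hθ0 hθ1 (by norm_num : 1 < 5)).const_mul
      (C / (1 - θ)))
  rw [zero_mul, mul_zero, add_zero] at hlim
  exact squeeze_zero' (.of_forall fun n => by positivity) hbound hlim
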